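/- (Paired observed contrast identity, Equation (4).) Under symmetric label noise with error rate e and positive class masses, for any two measurable LLM labelers ŷ₀, ŷ₁ : Ω → Fin K evaluated against the same ground truth y and the same reference r, the observed contrast decomposes as A_R(ŷ₁) − A_R(ŷ₀) = a·(A_T(ŷ₁) − A_T(ŷ₀)) + (J(ŷ₁) − J(ŷ₀)), where a = (1−e) − e/(K−1). -/

import Mathlib

/-!
Split every event by the true class `k`. Under symmetric noise the reference label satisfies
`μ(r = ℓ, y = k) = (c + (d - c)·[ℓ = k]) · μ(y = k)` with `d = 1 - e`, `c = e / (K - 1)`, so the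
product term of `J` summed over `ℓ` is `c · μ(y = k) + (d - c) · μ(ŷ = k, y = k)`. Summing over `k`
gives `A_R(ŷ) = (d - c) · A_T(ŷ) + J(ŷ) + c` for every labeler, and the constant `c` cancels in
the contrast.
-/

open MeasureTheory

/-- True agreement `A_T(ŷ) = μ({ŷ = y})`. -/
noncomputable def trueAgree {Ω : Type*} [MeasurableSpace Ω] {K : ℕ}
    (μ : Measure Ω) (y yhat : Ω → Fin K) : ℝ :=
  (μ {ω | yhat ω = y ω}).toReal

/-- Reference agreement `A_R(ŷ) = μ({ŷ = r})`. -/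
noncomputable def refAgree {Ω : Type*} [MeasurableSpace Ω] {K : ℕ}
    (μ : Measure Ω) (r yhat : Ω → Fin K) : ℝ :=
  (μ {ω | yhat ω = r ω}).toReal

/-- Measurement error `ε(ŷ) = 1 − A_T(ŷ)`. -/
noncomputable def measError {Ω : Type*} [MeasurableSpace Ω] {K : ℕ}
    (μ : Measure Ω) (y yhat : Ω → Fin K) : ℝ :=
  1 - trueAgree μ y yhat

/-- Co-labeling covariance
`J(ŷ) = ∑ₖ ∑ₗ [ μ({ŷ=ℓ}∩{r=ℓ}∩{y=k}) − μ({ŷ=ℓ}∩{y=k})·μ({r=ℓ}∩{y=k}) / μ({y=k}) ]`. -/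
noncomputable def coLabelCov {Ω : Type*} [MeasurableSpace Ω] {K : ℕ}
    (μ : Measure Ω) (y r yhat : Ω → Fin K) : ℝ :=
  ∑ k : Fin K, ∑ l : Fin K,
    ((μ ({ω | yhat ω = l} ∩ {ω | r ω = l} ∩ {ω | y ω = k})).toReal
      - (μ ({ω | yhat ω = l} ∩ {ω | y ω = k})).toReal
          * (μ ({ω | r ω = l} ∩ {ω | y ω = k})).toReal
          / (μ {ω | y ω = k}).toReal)

namespace MeasureTheory

theorem measureReal_eq_sum_fiber_inter {Ω ι : Type*} [MeasurableSpace Ω] (μ : Measure Ω)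
    [IsFiniteMeasure μ] [Fintype ι] [MeasurableSpace ι] [MeasurableSingletonClass ι]
    {z : Ω → ι} (hz : Measurable z) {s : Set Ω} (hs : MeasurableSet s) :
    μ.real s = ∑ i, μ.real ({ω | z ω = i} ∩ s) := by
  calc μ.real s = μ.real (⋃ i, {ω | z ω = i} ∩ s) := by congr 1; ext ω; simp
    _ = ∑ i, μ.real ({ω | z ω = i} ∩ s) :=
      measureReal_iUnion_fintype
        (fun i j hij ↦ Set.disjoint_left.2 fun ω hi hj ↦ hij (hi.1.symm.trans hj.1))
        fun i ↦ (hz (measurableSet_singleton i)).inter hs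

theorem mul_div_measureReal_of_subset {Ω : Type*} [MeasurableSpace Ω] (μ : Measure Ω)
    [IsFiniteMeasure μ] {s t : Set Ω} (hst : s ⊆ t) (c : ℝ) :
    μ.real s * (c * μ.real t) / μ.real t = c * μ.real s := by
  rcases eq_or_ne (μ.real t) 0 with ht | ht
  · have hs : μ.real s = 0 := le_antisymm (ht ▸ measureReal_mono hst) measureReal_nonneg
    simp [hs]
  · field_simp

end MeasureTheory

open MeasureTheory

section Agreement

variable {Ω : Type*} [MeasurableSpace Ω] {K : ℕ} (μ : Measure Ω) {y r yhat : Ω → Fin K}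

theorem refAgree_eq_sum [IsFiniteMeasure μ] (hy : Measurable y) (hr : Measurable r)
    (hyhat : Measurable yhat) :
    refAgree μ r yhat
      = ∑ k, ∑ l, μ.real ({ω | yhat ω = l} ∩ {ω | r ω = l} ∩ {ω | y ω = k}) := by
  have hagree : MeasurableSet {ω | yhat ω = r ω} := measurableSet_eq_fun hyhat hr
  rw [refAgree, ← measureReal_def, measureReal_eq_sum_fiber_inter μ hy hagree]
  refine Finset.sum_congr rfl fun k _ ↦ ?_
  rw [measureReal_eq_sum_fiber_inter μ hr
    ((measurableSet_eq_fun hy measurable_const).inter hagree)]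
  refine Finset.sum_congr rfl fun l _ ↦ congrArg μ.real ?_
  ext ω
  simp only [Set.mem_inter_iff, Set.mem_ofPred_eq]
  grind

theorem trueAgree_eq_sum [IsFiniteMeasure μ] (hy : Measurable y) (hyhat : Measurable yhat) :
    trueAgree μ y yhat = ∑ k, μ.real ({ω | yhat ω = k} ∩ {ω | y ω = k}) := by
  rw [trueAgree, ← measureReal_def,
    measureReal_eq_sum_fiber_inter μ hy (measurableSet_eq_fun hyhat hy)]
  refine Finset.sum_congr rfl fun k _ ↦ congrArg μ.real ?_
  ext ω
  simp only [Set.mem_inter_iff, Set.mem_ofPred_eq]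
  grind

theorem refAgree_eq_of_symmetric_noise [IsProbabilityMeasure μ] (hy : Measurable y)
    (hr : Measurable r) (hyhat : Measurable yhat) {d c : ℝ}
    (hdiag : ∀ k, μ.real ({ω | r ω = k} ∩ {ω | y ω = k}) = d * μ.real {ω | y ω = k})
    (hoff : ∀ k l, l ≠ k →
      μ.real ({ω | r ω = l} ∩ {ω | y ω = k}) = c * μ.real {ω | y ω = k}) :
    refAgree μ r yhat = (d - c) * trueAgree μ y yhat + coLabelCov μ y r yhat + c := by
  have hnoise : ∀ k l, μ.real ({ω | r ω = l} ∩ {ω | y ω = k})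
      = (c + if l = k then d - c else 0) * μ.real {ω | y ω = k} := by
    intro k l
    split_ifs with hlk
    · rw [hlk, hdiag]; ring
    · rw [hoff k l hlk, add_zero]
  have hrow : ∀ k, ∑ l, μ.real ({ω | yhat ω = l} ∩ {ω | y ω = k})
      * μ.real ({ω | r ω = l} ∩ {ω | y ω = k}) / μ.real {ω | y ω = k}
      = c * μ.real {ω | y ω = k} + (d - c) * μ.real ({ω | yhat ω = k} ∩ {ω | y ω = k}) := by
    intro k
    simp_rw [hnoise k, mul_div_measureReal_of_subset μ Set.inter_subset_right, add_mul,
      Finset.sum_add_distrib, ← Finset.mul_sum, ite_mul, zero_mul, Finset.sum_ite_eq',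
      Finset.mem_univ, if_true]
    rw [← measureReal_eq_sum_fiber_inter μ hyhat (measurableSet_eq_fun hy measurable_const)]
  have htotal : ∑ k, μ.real {ω | y ω = k} = 1 := by
    simpa using (measureReal_eq_sum_fiber_inter μ hy MeasurableSet.univ).symm
  simp only [coLabelCov, ← measureReal_def, Finset.sum_sub_distrib, hrow,
    Finset.sum_add_distrib, ← Finset.mul_sum, htotal, ← refAgree_eq_sum μ hy hr hyhat,
    ← trueAgree_eq_sum μ hy hyhat]
  ring

end Agreement

theorem paired_observed_contrast_general
    {Ω : Type*} [MeasurableSpace Ω] {K : ℕ}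
    (e : ℝ)
    (μ : Measure Ω) [IsProbabilityMeasure μ]
    (y r : Ω → Fin K) (hy : Measurable y) (hr : Measurable r)
    (hnoise_diag : ∀ k : Fin K,
      (μ ({ω | r ω = k} ∩ {ω | y ω = k})).toReal
        = (1 - e) * (μ {ω | y ω = k}).toReal)
    (hnoise_off : ∀ k l : Fin K, l ≠ k →
      (μ ({ω | r ω = l} ∩ {ω | y ω = k})).toReal
        = e / ((K : ℝ) - 1) * (μ {ω | y ω = k}).toReal)
    (yhat₀ yhat₁ : Ω → Fin K) (hyhat₀ : Measurable yhat₀) (hyhat₁ : Measurable yhat₁) :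
    refAgree μ r yhat₁ - refAgree μ r yhat₀
      = ((1 - e) - e / ((K : ℝ) - 1))
          * (trueAgree μ y yhat₁ - trueAgree μ y yhat₀)
        + (coLabelCov μ y r yhat₁ - coLabelCov μ y r yhat₀) := by
  rw [refAgree_eq_of_symmetric_noise μ hy hr hyhat₁ hnoise_diag hnoise_off,
    refAgree_eq_of_symmetric_noise μ hy hr hyhat₀ hnoise_diag hnoise_off]
  ring

/-- **paired observed contrast identity, Equation (4).** Under
symmetric label noise with error rate `e ∈ [0,1)` and positive class masses, for
labelers `ŷ₀, ŷ₁` against the same `y` and `r`,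
`A_R(ŷ₁) − A_R(ŷ₀) = a·(A_T(ŷ₁) − A_T(ŷ₀)) + (J(ŷ₁) − J(ŷ₀))`. -/
theorem paired_observed_contrast
    {Ω : Type*} [MeasurableSpace Ω] {K : ℕ} (hK : 2 ≤ K)
    (e : ℝ) (he0 : 0 ≤ e) (he1 : e < 1)
    (μ : Measure Ω) [IsProbabilityMeasure μ]
    (y r : Ω → Fin K) (hy : Measurable y) (hr : Measurable r)
    (hnoise_diag : ∀ k : Fin K,
      (μ ({ω | r ω = k} ∩ {ω | y ω = k})).toReal
        = (1 - e) * (μ {ω | y ω = k}).toReal)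
    (hnoise_off : ∀ k l : Fin K, l ≠ k →
      (μ ({ω | r ω = l} ∩ {ω | y ω = k})).toReal
        = e / ((K : ℝ) - 1) * (μ {ω | y ω = k}).toReal)
    (hpos : ∀ k : Fin K, 0 < μ {ω | y ω = k})
    (yhat₀ yhat₁ : Ω → Fin K) (hyhat₀ : Measurable yhat₀) (hyhat₁ : Measurable yhat₁) :
    refAgree μ r yhat₁ - refAgree μ r yhat₀
      = ((1 - e) - e / ((K : ℝ) - 1))
          * (trueAgree μ y yhat₁ - trueAgree μ y yhat₀)
        + (coLabelCov μ y r yhat₁ - coLabelCov μ y r yhat₀) :=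
  paired_observed_contrast_general e μ y r hy hr hnoise_diag hnoise_off yhat₀ yhat₁ hyhat₀ hyhat₁
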